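/- For every h > 0 and every ξ ∈ ℝ², the vectors w^tr_0(ξ) = (1, φ_{e₃}(ξ), φ_{−e₂}(ξ)) and w^tr_±(ξ) = (1, φ_{e₃}(ξ ± h⁻¹f₁'), φ_{−e₂}(ξ ± h⁻¹f₁')) are eigenvectors of the 3×3 matrix Ĥ^tr_h(ξ): Ĥ^tr_h(ξ) w^tr_0(ξ) = E^tr_0(ξ) w^tr_0(ξ) and Ĥ^tr_h(ξ) w^tr_±(ξ) = E^tr_±(ξ) w^tr_±(ξ). -/

import Mathlib

open MeasureTheory Complex Filter Topology Matrix
open scoped FourierTransform RealInnerProductSpace ComplexConjugate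

noncomputable section

abbrev R2 : Type := EuclideanSpace ℝ (Fin 2)

def v2 (a b : ℝ) : R2 := WithLp.toLp 2 ![a, b]

def he1 : R2 := v2 (1/2) (Real.sqrt 3 / 2)
def he2 : R2 := v2 (1/2) (-(Real.sqrt 3) / 2)
def he3 : R2 := v2 (-1) 0
def hf1 : R2 := v2 (3/2) (Real.sqrt 3 / 2)
def hf2 : R2 := v2 (3/2) (-(Real.sqrt 3) / 2)
def hf1' : R2 := v2 (1/3) (Real.sqrt 3 / 3)

/-- `φ_f(ξ) = exp(2πi h f·ξ)`. -/
def phase (h : ℝ) (f ξ : R2) : ℂ :=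
  Complex.exp (2 * Real.pi * Complex.I * (h : ℂ) * ((⟪f, ξ⟫ : ℝ) : ℂ))

/-- The symbol `Ĥ^tr_h(ξ)` of the triangular Laplacian in the 3-component representation. -/
def HtrMat (h : ℝ) (ξ : R2) : Matrix (Fin 3) (Fin 3) ℂ :=
  ((h : ℂ) ^ 2)⁻¹ •
    !![6, -1 - phase h hf1 ξ - phase h hf2 ξ, -1 - phase h hf2 ξ - phase h (hf2 - hf1) ξ;
       -1 - phase h (-hf1) ξ - phase h (-hf2) ξ, 6, -1 - phase h (-hf1) ξ - phase h (hf2 - hf1) ξ;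
       -1 - phase h (-hf2) ξ - phase h (hf1 - hf2) ξ, -1 - phase h hf1 ξ - phase h (hf1 - hf2) ξ, 6]

/-- `E^tr(ξ) = h⁻²(6 − 2∑_{j=1}^3 cos(2πh e_j·ξ))`. -/
def Etr (h : ℝ) (ξ : R2) : ℝ :=
  (6 - 2 * (Real.cos (2 * Real.pi * h * ⟪he1, ξ⟫) + Real.cos (2 * Real.pi * h * ⟪he2, ξ⟫) +
    Real.cos (2 * Real.pi * h * ⟪he3, ξ⟫))) / h ^ 2

/-- `w^tr_0(ξ) = (1, φ_{e₃}(ξ), φ_{−e₂}(ξ))`. -/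
def wtr0 (h : ℝ) (ξ : R2) : Fin 3 → ℂ := ![1, phase h he3 ξ, phase h (-he2) ξ]

/-!
Put `a = φ_{e₁}(ξ)`, `b = φ_{e₂}(ξ)`, `c = φ_{e₃}(ξ)`. Since `e₁ + e₂ + e₃ = 0` we have `abc = 1`, and
since `f₁ = 2e₁ + e₂`, `f₂ = e₁ + 2e₂` every entry of `h²Ĥ^tr_h(ξ)` is a polynomial in `a, b, c`.
The eigenvector equation for `w^tr_0 = (1, c, ac)` then becomes a polynomial identity modulo `abc = 1`, with eigenvalue `h⁻²(6 − a − a⁻¹ − b − b⁻¹ − c − c⁻¹) = E^tr(ξ)`.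
Because `f₁·f₁' = 1` and `f₂·f₁' = 0`, the matrix `Ĥ^tr_h` is invariant under `ξ ↦ ξ ± h⁻¹f₁'`, so
`w^tr_±(ξ) = w^tr_0(ξ ± h⁻¹f₁')` are eigenvectors of the same matrix.
-/

lemma phase_add_left (h : ℝ) (f g ξ : R2) : phase h (f + g) ξ = phase h f ξ * phase h g ξ := by
  rw [phase, phase, phase, ← Complex.exp_add, inner_add_left]
  congr 1
  push_cast
  ring

lemma phase_zero_left (h : ℝ) (ξ : R2) : phase h 0 ξ = 1 := by
  simp [phase]

lemma two_mul_cos_eq_phase_add_phase_neg (h : ℝ) (f ξ : R2) :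
    2 * ((Real.cos (2 * Real.pi * h * ⟪f, ξ⟫) : ℝ) : ℂ) = phase h f ξ + phase h (-f) ξ := by
  rw [phase, phase, inner_neg_left, Complex.ofReal_cos, Complex.cos, mul_div_cancel₀ _ two_ne_zero]
  push_cast
  congr 2 <;> ring

lemma phase_add_inv_smul_of_inner_eq_int {h : ℝ} (hh : h ≠ 0) {f η : R2} {n : ℤ}
    (hn : ⟪f, η⟫ = n) (ξ : R2) : phase h f (ξ + h⁻¹ • η) = phase h f ξ := by
  have hh' : (h : ℂ) ≠ 0 := by exact_mod_cast hh
  rw [phase, phase, inner_add_right, real_inner_smul_right, hn]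
  push_cast
  rw [mul_add, Complex.exp_add,
    show 2 * Real.pi * Complex.I * (h : ℂ) * ((h : ℂ)⁻¹ * n) = n * (2 * Real.pi * Complex.I) by
      field_simp,
    Complex.exp_int_mul_two_pi_mul_I, mul_one]

lemma he1_add_he2_add_he3 : he1 + he2 + he3 = 0 := by
  ext i; fin_cases i <;> simp [he1, he2, he3, v2] <;> ring

lemma neg_he1_eq : -he1 = he2 + he3 := by
  linear_combination (norm := module) -he1_add_he2_add_he3

lemma neg_he2_eq : -he2 = he1 + he3 := by
  linear_combination (norm := module) -he1_add_he2_add_he3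

lemma neg_he3_eq : -he3 = he1 + he2 := by
  linear_combination (norm := module) -he1_add_he2_add_he3

lemma hf1_eq : hf1 = he1 + he1 + he2 := by
  ext i; fin_cases i <;> simp [hf1, he1, he2, v2] <;> ring

lemma hf2_eq : hf2 = he1 + he2 + he2 := by
  ext i; fin_cases i <;> simp [hf2, he1, he2, v2] <;> ring

lemma inner_hf1_hf1' : ⟪hf1, hf1'⟫ = (1 : ℤ) := by
  simp [hf1, hf1', v2, PiLp.inner_apply, Fin.sum_univ_two]
  nlinarith [Real.mul_self_sqrt (show (0 : ℝ) ≤ 3 by norm_num)]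

lemma inner_hf2_hf1' : ⟪hf2, hf1'⟫ = (0 : ℤ) := by
  simp [hf2, hf1', v2, PiLp.inner_apply, Fin.sum_univ_two]
  nlinarith [Real.mul_self_sqrt (show (0 : ℝ) ≤ 3 by norm_num)]

def symbolOfPhases {R : Type*} [CommRing R] (a b c : R) : Matrix (Fin 3) (Fin 3) R :=
  !![6, -1 - a ^ 2 * b - a * b ^ 2, -1 - a * b ^ 2 - b ^ 2 * c;
     -1 - b * c ^ 2 - a * c ^ 2, 6, -1 - b * c ^ 2 - b ^ 2 * c;
     -1 - a * c ^ 2 - a ^ 2 * c, -1 - a ^ 2 * b - a ^ 2 * c, 6]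

lemma symbolOfPhases_mulVec {R : Type*} [CommRing R] {a b c : R} (habc : a * b * c = 1) :
    (symbolOfPhases a b c).mulVec ![1, c, a * c] =
      (6 - (a + b * c + b + a * c + c + a * b)) • ![1, c, a * c] := by
  ext i
  fin_cases i <;> simp [symbolOfPhases, Matrix.mulVec, dotProduct, Fin.sum_univ_three]
  · linear_combination (-(a + b + a * b + b * c)) * habc
  · linear_combination (1 - c ^ 2 - b * c) * habc
  · linear_combination (1 + c) * habc

section Phases

variable (h : ℝ) (ξ : R2)

lemma phase_he1_mul_phase_he2_mul_phase_he3 :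
    phase h he1 ξ * phase h he2 ξ * phase h he3 ξ = 1 := by
  rw [← phase_add_left, ← phase_add_left, he1_add_he2_add_he3, phase_zero_left]

lemma HtrMat_eq_smul_symbolOfPhases :
    HtrMat h ξ = ((h : ℂ) ^ 2)⁻¹ • symbolOfPhases (phase h he1 ξ) (phase h he2 ξ) (phase h he3 ξ) := by
  have hf2_sub_hf1 : hf2 - hf1 = he2 + he2 + he3 := by
    rw [hf1_eq, hf2_eq]; linear_combination (norm := module) -he1_add_he2_add_he3
  have hf1_sub_hf2 : hf1 - hf2 = he1 + he1 + he3 := by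
    rw [hf1_eq, hf2_eq]; linear_combination (norm := module) -he1_add_he2_add_he3
  have neg_hf1 : -hf1 = he2 + he3 + he3 := by
    rw [hf1_eq]; linear_combination (norm := module) (-2 : ℝ) • he1_add_he2_add_he3
  have neg_hf2 : -hf2 = he1 + he3 + he3 := by
    rw [hf2_eq]; linear_combination (norm := module) (-2 : ℝ) • he1_add_he2_add_he3
  rw [HtrMat, symbolOfPhases, hf2_sub_hf1, hf1_sub_hf2, neg_hf1, neg_hf2, hf1_eq, hf2_eq]
  simp only [phase_add_left]
  ring_nf

lemma ofReal_Etr : ((Etr h ξ : ℝ) : ℂ) =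
    (6 - (phase h he1 ξ + phase h he2 ξ * phase h he3 ξ + phase h he2 ξ +
      phase h he1 ξ * phase h he3 ξ + phase h he3 ξ + phase h he1 ξ * phase h he2 ξ)) / (h : ℂ) ^ 2 := by
  simp only [Etr, Complex.ofReal_div, Complex.ofReal_sub, Complex.ofReal_mul, Complex.ofReal_add,
    Complex.ofReal_ofNat, Complex.ofReal_pow]
  rw [mul_add, mul_add, two_mul_cos_eq_phase_add_phase_neg, two_mul_cos_eq_phase_add_phase_neg,
    two_mul_cos_eq_phase_add_phase_neg, neg_he1_eq, neg_he2_eq, neg_he3_eq]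
  simp only [phase_add_left]
  ring

lemma HtrMat_mulVec_wtr0 : (HtrMat h ξ).mulVec (wtr0 h ξ) = ((Etr h ξ : ℝ) : ℂ) • wtr0 h ξ := by
  have hw : wtr0 h ξ = ![1, phase h he3 ξ, phase h he1 ξ * phase h he3 ξ] := by
    rw [wtr0, neg_he2_eq, phase_add_left]
  rw [hw, HtrMat_eq_smul_symbolOfPhases, ofReal_Etr, Matrix.smul_mulVec,
    symbolOfPhases_mulVec (phase_he1_mul_phase_he2_mul_phase_he3 h ξ), smul_smul, div_eq_inv_mul]

end Phases

lemma HtrMat_add_inv_smul {h : ℝ} (hh : h ≠ 0) {η : R2} {m n : ℤ} (hm : ⟪hf1, η⟫ = m)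
    (hn : ⟪hf2, η⟫ = n) (ξ : R2) : HtrMat h (ξ + h⁻¹ • η) = HtrMat h ξ := by
  have shift {f : R2} {k : ℤ} (hk : ⟪f, η⟫ = k) := phase_add_inv_smul_of_inner_eq_int hh hk ξ
  rw [HtrMat, HtrMat, shift hm, shift hn,
    shift (f := hf2 - hf1) (k := n - m) (by rw [inner_sub_left, hm, hn]; push_cast; ring),
    shift (f := hf1 - hf2) (k := m - n) (by rw [inner_sub_left, hm, hn]; push_cast; ring),
    shift (f := -hf1) (k := -m) (by rw [inner_neg_left, hm]; push_cast; ring),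
    shift (f := -hf2) (k := -n) (by rw [inner_neg_left, hn]; push_cast; ring)]

/-- Lemma `lem-spec-tr`: `w^tr_0(ξ)` and `w^tr_±(ξ)` are eigenvectors of
`Ĥ^tr_h(ξ)` with eigenvalues `E^tr_0(ξ) = E^tr(ξ)` and `E^tr_±(ξ) = E^tr(ξ ± h⁻¹f₁')`. -/
theorem triangular_symbol_eigenvectors (h : ℝ) (hh : 0 < h) (ξ : R2) :
    (HtrMat h ξ).mulVec (wtr0 h ξ) = ((Etr h ξ : ℝ) : ℂ) • wtr0 h ξ ∧
    (HtrMat h ξ).mulVec (wtr0 h (ξ + h⁻¹ • hf1')) =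
      ((Etr h (ξ + h⁻¹ • hf1') : ℝ) : ℂ) • wtr0 h (ξ + h⁻¹ • hf1') ∧
    (HtrMat h ξ).mulVec (wtr0 h (ξ - h⁻¹ • hf1')) =
      ((Etr h (ξ - h⁻¹ • hf1') : ℝ) : ℂ) • wtr0 h (ξ - h⁻¹ • hf1') := by
  have hshift := HtrMat_add_inv_smul hh.ne' inner_hf1_hf1' inner_hf2_hf1'
  refine ⟨HtrMat_mulVec_wtr0 h ξ, ?_, ?_⟩
  · rw [← hshift ξ]
    exact HtrMat_mulVec_wtr0 h _
  · have := HtrMat_mulVec_wtr0 h (ξ - h⁻¹ • hf1')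
    rwa [← hshift, sub_add_cancel] at this

end
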